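/- Let z_0 ≥ 1/4 with z_0 < 1/2 and z_{t+1} = sqrt(z_t(1 - z_t)). If t ≥ log₂(log₂(1/ε)) for 0 < ε < 1/2, then z_t ≥ 1/2 - ε. -/

import Mathlib

/-!
With `ζ = 1 - 2z`, one step of the recursion gives `ζ' = 1 - 2√(z(1-z))` and
`ζ² = 1 - 4z(1-z)`; since `√(z(1-z)) ≤ 1/2`, this yields `0 ≤ ζ' ≤ ζ²`. Hence `ζ_t ≤ ζ_0 ^ 2^t ≤ (1/2)^(2^t)`,
which is at most `ε` as soon as `2^t ≥ log₂(1/ε)`.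
-/

open Real

lemma sqrt_mul_one_sub_le_half (x : ℝ) : √(x * (1 - x)) ≤ 1 / 2 :=
  sqrt_le_iff.mpr ⟨by norm_num, by nlinarith [sq_nonneg (2 * x - 1)]⟩

lemma one_sub_two_mul_sqrt_mul_one_sub_le_sq (x : ℝ) :
    1 - 2 * √(x * (1 - x)) ≤ (1 - 2 * x) ^ 2 := by
  have hs := sqrt_mul_one_sub_le_half x
  have hsq : x * (1 - x) ≤ √(x * (1 - x)) ^ 2 := sq_sqrt' (x := x * (1 - x)) ▸ le_max_left _ _
  nlinarith [sqrt_nonneg (x * (1 - x))]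

lemma le_pow_two_pow_of_le_sq {u : ℕ → ℝ} (hu : ∀ t, 0 ≤ u t) (hsq : ∀ t, u (t + 1) ≤ u t ^ 2)
    (t : ℕ) : u t ≤ u 0 ^ 2 ^ t := by
  induction t with
  | zero => simp
  | succ t ih =>
    calc u (t + 1) ≤ u t ^ 2 := hsq t
      _ ≤ (u 0 ^ 2 ^ t) ^ 2 := pow_le_pow_left₀ (hu t) ih 2
      _ = u 0 ^ 2 ^ (t + 1) := by rw [← pow_mul, pow_succ]

lemma Real.le_rpow_of_logb_le {b x y : ℝ} (hb : 1 < b) (h : logb b x ≤ y) : x ≤ b ^ y := by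
  rcases le_or_gt x 0 with hx | hx
  · exact hx.trans (rpow_pos_of_pos (by linarith) y).le
  · exact (logb_le_iff_le_rpow hb hx).mp h

lemma half_pow_two_pow_le {ε : ℝ} (hε : 0 < ε) {t : ℕ}
    (ht : logb 2 (logb 2 (1 / ε)) ≤ t) : (1 / 2 : ℝ) ^ 2 ^ t ≤ ε := by
  have hlog : logb 2 (1 / ε) ≤ (2 ^ t : ℕ) := by
    simpa [← rpow_natCast] using le_rpow_of_logb_le one_lt_two ht
  have hinv : 1 / ε ≤ 2 ^ 2 ^ t := by
    simpa [← rpow_natCast] using le_rpow_of_logb_le one_lt_two hlog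
  rw [div_pow, one_pow, div_le_iff₀ (by positivity)]
  rw [div_le_iff₀ hε] at hinv
  linarith

theorem stmt_6_general (z : ℕ → ℝ) (h0 : z 0 ≥ 1/4) (h0' : z 0 < 1/2)
    (hrec : ∀ t, z (t+1) = Real.sqrt (z t * (1 - z t)))
    (ε : ℝ) (hε0 : 0 < ε)
    (t : ℕ) (ht : (t : ℝ) ≥ Real.logb 2 (Real.logb 2 (1/ε))) :
    z t ≥ 1/2 - ε := by
  have hζ_nonneg : ∀ t, 0 ≤ 1 - 2 * z t := by
    rintro (_ | t)
    · linarith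
    · linarith [hrec t, sqrt_mul_one_sub_le_half (z t)]
  have hζ_sq : ∀ t, 1 - 2 * z (t + 1) ≤ (1 - 2 * z t) ^ 2 := fun t =>
    hrec t ▸ one_sub_two_mul_sqrt_mul_one_sub_le_sq (z t)
  have hζ0 : (1 - 2 * z 0) ^ 2 ^ t ≤ (1 / 2) ^ 2 ^ t :=
    pow_le_pow_left₀ (hζ_nonneg 0) (by linarith) _
  linarith [le_pow_two_pow_of_le_sq hζ_nonneg hζ_sq t, half_pow_two_pow_le hε0 ht]

theorem stmt_6 (z : ℕ → ℝ) (h0 : z 0 ≥ 1/4) (h0' : z 0 < 1/2)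
    (hrec : ∀ t, z (t+1) = Real.sqrt (z t * (1 - z t)))
    (ε : ℝ) (hε0 : 0 < ε) (hε2 : ε < 1/2)
    (t : ℕ) (ht : (t : ℝ) ≥ Real.logb 2 (Real.logb 2 (1/ε))) :
    z t ≥ 1/2 - ε :=
  stmt_6_general z h0 h0' hrec ε hε0 t ht
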